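/- arXiv:1504.07298 — 2 statements merged into one kernel-verified Lean document; each statement's English description precedes it below -/
import Mathlib

section
/- If S[0] = L[0], then the Swap-Insert Correction distance satisfies δ(S, L) = δ(S.tail, L.tail). -/
/-!
Erasing the first occurrence of a fixed symbol `a` turns every insertion or adjacent swap into
at most one insertion or adjacent swap. Applied with `a` the common first symbol, this turns a
correction `a :: S ⟶ a :: L` into a correction `S ⟶ L` of no greater length; conversely, a
correction `S ⟶ L` lifts to one of `a :: S ⟶ a :: L` by prepending `a` to every word.
-/

open scoped BigOperators

variable {α : Type*} [DecidableEq α]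

/-- One correction step: insertion of a symbol at an arbitrary position,
or swap of two adjacent symbols. -/
inductive SIStep : List α → List α → Prop
  | insert (u v : List α) (a : α) : SIStep (u ++ v) (u ++ a :: v)
  | swap (u v : List α) (a b : α) : SIStep (u ++ a :: b :: v) (u ++ b :: a :: v)

/-- There is a transformation from `S` to `L` using exactly `k` correction steps. -/
def SIReach (S L : List α) (k : ℕ) : Prop :=
  ∃ f : ℕ → List α, f 0 = S ∧ f k = L ∧ ∀ i < k, SIStep (f i) (f (i + 1))

/-- The Swap-Insert Correction distance: the minimum number of insertions and
adjacent swaps transforming `S` into `L`, or `⊤` if no such sequence exists. -/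
noncomputable def SIDist (S L : List α) : ℕ∞ :=
  sInf {n : ℕ∞ | ∃ k : ℕ, n = (k : ℕ∞) ∧ SIReach S L k}

namespace SIStep

variable {S L : List α}

omit [DecidableEq α] in
theorem append_left (u : List α) : SIStep S L → SIStep (u ++ S) (u ++ L)
  | insert v w a => by simpa only [List.append_assoc] using insert (u ++ v) w a
  | swap v w a b => by simpa only [List.append_assoc] using swap (u ++ v) w a b

theorem erase_of_mem {a : α} {v : List α} (h : a ∈ v) : SIStep (v.erase a) v := by
  obtain ⟨v₁, v₂, -, rfl, hv⟩ := List.exists_erase_eq h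
  rw [hv]
  exact insert v₁ v₂ a

theorem erase_insert_nil (a b : α) (v : List α) :
    v.erase a = (b :: v).erase a ∨ SIStep (v.erase a) ((b :: v).erase a) := by
  by_cases hb : b = a
  · subst hb
    rw [List.erase_cons_head]
    by_cases hv : b ∈ v
    · exact .inr (erase_of_mem hv)
    · exact .inl (List.erase_of_not_mem hv)
  · rw [List.erase_cons_tail (by simpa using hb)]
    exact .inr (insert [] _ b)

theorem erase_swap_nil (a b c : α) (v : List α) :
    (b :: c :: v).erase a = (c :: b :: v).erase a ∨
      SIStep ((b :: c :: v).erase a) ((c :: b :: v).erase a) := by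
  by_cases hb : b = a <;> by_cases hc : c = a
  · subst hb hc
    exact .inl rfl
  · subst hb
    exact .inl (by simp [hc])
  · subst hc
    exact .inl (by simp [hb])
  · simp only [List.erase_cons, beq_iff_eq, hb, hc, if_false]
    exact .inr (swap [] _ b c)

theorem erase (a : α) (h : SIStep S L) :
    S.erase a = L.erase a ∨ SIStep (S.erase a) (L.erase a) := by
  rcases h with ⟨u, v, b⟩ | ⟨u, v, b, c⟩
  all_goals by_cases hu : a ∈ u
  · simp only [List.erase_append_left _ hu]
    exact .inr (insert _ _ b)
  · simp only [List.erase_append_right _ hu]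
    exact (erase_insert_nil a b v).imp (congrArg _) (append_left u)
  · simp only [List.erase_append_left _ hu]
    exact .inr (swap _ _ b c)
  · simp only [List.erase_append_right _ hu]
    exact (erase_swap_nil a b c v).imp (congrArg _) (append_left u)

end SIStep

namespace SIReach

variable {S L : List α} {k : ℕ}

omit [DecidableEq α] in
theorem zero_iff : SIReach S L 0 ↔ S = L := by
  refine ⟨fun ⟨f, h0, hk, _⟩ => h0.symm.trans hk, ?_⟩
  rintro rfl
  exact ⟨fun _ => S, rfl, rfl, fun i hi => absurd hi (Nat.not_lt_zero i)⟩

omit [DecidableEq α] in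
theorem succ_iff : SIReach S L (k + 1) ↔ ∃ M, SIStep S M ∧ SIReach M L k := by
  constructor
  · rintro ⟨f, h0, hk, hs⟩
    exact ⟨f 1, h0 ▸ hs 0 k.succ_pos, fun i => f (i + 1), rfl, hk,
      fun i hi => hs (i + 1) (by omega)⟩
  · rintro ⟨M, hSM, f, h0, hk, hs⟩
    refine ⟨fun i => if i = 0 then S else f (i - 1), rfl, by simp [hk], ?_⟩
    rintro (_ | i) hi
    · simpa [h0] using hSM
    · simpa using hs i (by omega)

omit [DecidableEq α] in
theorem cons (a : α) (h : SIReach S L k) : SIReach (a :: S) (a :: L) k := by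
  obtain ⟨f, h0, hk, hs⟩ := h
  exact ⟨fun i => a :: f i, by simp [h0], by simp [hk],
    fun i hi => by simpa using (hs i hi).append_left [a]⟩

theorem erase (a : α) (h : SIReach S L k) : ∃ m ≤ k, SIReach (S.erase a) (L.erase a) m := by
  induction k generalizing S with
  | zero => exact ⟨0, le_rfl, zero_iff.mpr (by rw [zero_iff.mp h])⟩
  | succ k ih =>
    obtain ⟨M, hSM, hML⟩ := succ_iff.mp h
    obtain ⟨m, hmk, hm⟩ := ih hML
    rcases hSM.erase a with heq | hstep
    · exact ⟨m, by omega, heq ▸ hm⟩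
    · exact ⟨m + 1, by omega, succ_iff.mpr ⟨_, hstep, hm⟩⟩

end SIReach

omit [DecidableEq α] in
theorem siDist_le_of_reach {S L S' L' : List α}
    (H : ∀ k, SIReach S' L' k → ∃ m ≤ k, SIReach S L m) :
    SIDist S L ≤ SIDist S' L' := by
  refine le_sInf ?_
  rintro n ⟨k, rfl, hk⟩
  obtain ⟨m, hmk, hm⟩ := H k hk
  exact le_trans (sInf_le ⟨m, rfl, hm⟩) (by exact_mod_cast hmk)

/-- If the first symbols of `S` and `L` coincide, then
`δ(S, L) = δ(S.tail, L.tail)`. -/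
theorem dist_cons_eq (S L : List α) (hS : S ≠ []) (hL : L ≠ [])
    (h : S.head hS = L.head hL) :
    SIDist S L = SIDist S.tail L.tail := by
  obtain ⟨a, S, rfl⟩ := List.exists_cons_of_ne_nil hS
  obtain ⟨b, L, rfl⟩ := List.exists_cons_of_ne_nil hL
  obtain rfl : a = b := h
  simp only [List.tail_cons]
  refine le_antisymm (siDist_le_of_reach fun k hk => ⟨k, le_rfl, hk.cons a⟩) ?_
  refine siDist_le_of_reach fun k hk => ?_
  simpa only [List.erase_cons_head] using hk.erase a
end

section
/- If S[0] ≠ L[0] and δ(S, L) is finite, then δ(S, L) = min(d_ins, d_swaps), where d_ins = 1 + δ(S, L.tail), and d_swaps = (r − 1) + δ(S', L.tail) if the symbol L[0] occurs in S with first occurrence at position r (1-indexed) and S' is S with that occurrence removed, and d_swaps = ∞ if L[0] does not occur in S. -/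
open scoped BigOperators

variable {α : Type*} [DecidableEq α]

/-! Both branches are upper bounds: insert `L[0]` in front of a correction of `S` into
`L.tail`, or swap the first `L[0]` of `S` to the front and correct the rest.

For the lower bound, follow the symbol that ends up at the head of `L` backwards through a
correction sequence. Either it was inserted, and dropping that insertion corrects `S` into
`L.tail` with one step less; or it is a symbol of `S`, at position `i` say. Each swap moves it
by at most one place, so at least `i` swaps involve it, and dropping these swaps together with
the symbol corrects `S` minus that symbol into `L.tail`. Removing the first `L[0]` instead costs
no more: if it is at position `r ≤ i`, then `S` minus it becomes `S` minus the symbol at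
position `i` in at most `i - r` swaps. -/

section

variable {β : Type*}

theorem List.append_cons_eq_append_cons {w v u v' : List β} {a x : β}
    (h : w ++ a :: v = u ++ x :: v') :
    (∃ m, u = w ++ a :: m ∧ v = m ++ x :: v') ∨ (w = u ∧ a = x ∧ v = v') ∨
      ∃ m, w = u ++ x :: m ∧ v' = m ++ a :: v := by
  rcases List.append_eq_append_iff.mp h with
    ⟨_ | ⟨b, m⟩, rfl, hv⟩ | ⟨_ | ⟨b, m⟩, rfl, hv'⟩
  · simp_all
  · simp only [List.cons_append, List.cons.injEq] at hv
    obtain ⟨rfl, rfl⟩ := hv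
    exact Or.inl ⟨m, rfl, rfl⟩
  · simp_all [eq_comm]
  · simp only [List.cons_append, List.cons.injEq] at hv'
    obtain ⟨rfl, rfl⟩ := hv'
    exact Or.inr (Or.inr ⟨m, rfl, rfl⟩)

inductive SIChain : List β → List β → ℕ → Prop
  | refl (L : List β) : SIChain L L 0
  | head {S T L : List β} {k : ℕ} : SIStep S T → SIChain T L k → SIChain S L (k + 1)

namespace SIChain

variable {S T U : List β} {k m : ℕ}

theorem trans (h₁ : SIChain S T m) (h₂ : SIChain T U k) : SIChain S U (m + k) := by
  induction h₁ with
  | refl => simpa using h₂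
  | head hs _ ih => simpa [Nat.add_right_comm] using head hs (ih h₂)

theorem single (h : SIStep S T) : SIChain S T 1 :=
  head h (refl T)

theorem cons (x : β) (h : SIChain S T k) : SIChain (x :: S) (x :: T) k := by
  induction h with
  | refl => exact refl _
  | head hs _ ih =>
    refine head ?_ ih
    cases hs with
    | insert u v a => exact SIStep.insert (x :: u) v a
    | swap u v a b => exact SIStep.swap (x :: u) v a b

theorem move (w v : List β) (a : β) : SIChain (w ++ a :: v) (a :: (w ++ v)) w.length := by
  induction w with
  | nil => exact refl _
  | cons x w ih => exact (ih.cons x).trans (single (SIStep.swap [] (w ++ v) x a))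

theorem to_cons_cases {a : β} {Y : List β} (h : SIChain S (a :: Y) k) :
    (∃ k', k' + 1 ≤ k ∧ SIChain S Y k') ∨
      ∃ w v k', S = w ++ a :: v ∧ w.length + k' ≤ k ∧ SIChain (w ++ v) Y k' := by
  generalize hL : a :: Y = L at h
  induction h with
  | refl => exact Or.inr ⟨[], Y, 0, hL.symm, le_rfl, refl Y⟩
  | @head S T L k hs _ ih =>
    rcases ih hL with ⟨k', hk', hY⟩ | ⟨w, v, k', hT, hk', hY⟩
    · exact Or.inl ⟨k' + 1, by omega, head hs hY⟩
    cases hs with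
    | insert u v' x =>
      rcases List.append_cons_eq_append_cons hT.symm with
        ⟨m, rfl, rfl⟩ | ⟨rfl, rfl, rfl⟩ | ⟨m, rfl, rfl⟩
      · have hY' : SIChain (w ++ m ++ x :: v') Y k' := by simpa using hY
        refine Or.inr ⟨w, m ++ v', k' + 1, by simp, by omega, ?_⟩
        simpa using head (SIStep.insert (w ++ m) v' x) hY'
      · exact Or.inl ⟨k', by omega, hY⟩
      · have hY' : SIChain (u ++ x :: (m ++ v)) Y k' := by simpa using hY
        refine Or.inr ⟨u ++ m, v, k' + 1, by simp, by simp at hk' ⊢; omega, ?_⟩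
        simpa using head (SIStep.insert u (m ++ v) x) hY'
    | swap u v' c d =>
      rcases List.append_cons_eq_append_cons hT.symm with
        ⟨m, rfl, rfl⟩ | ⟨rfl, rfl, rfl⟩ | ⟨_ | ⟨b, m⟩, rfl, hv'⟩
      · have hY' : SIChain (w ++ m ++ d :: c :: v') Y k' := by simpa using hY
        refine Or.inr ⟨w, m ++ c :: d :: v', k' + 1, by simp, by omega, ?_⟩
        simpa using head (SIStep.swap (w ++ m) v' c d) hY'
      · exact Or.inr ⟨w ++ [c], v', k', by simp, by simp; omega, by simpa using hY⟩
      · obtain ⟨rfl, rfl⟩ : c = a ∧ v' = v := by simpa using hv'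
        exact Or.inr ⟨u, d :: v', k', by simp, by simp at hk'; omega, by simpa using hY⟩
      · obtain ⟨rfl, rfl⟩ : c = b ∧ v' = m ++ a :: v := by simpa using hv'
        have hY' : SIChain (u ++ d :: c :: (m ++ v)) Y k' := by simpa using hY
        refine Or.inr ⟨u ++ c :: d :: m, v, k' + 1, by simp, by simp at hk' ⊢; omega, ?_⟩
        simpa using head (SIStep.swap u (m ++ v) c d) hY'

end SIChain

variable {S L : List β} {k : ℕ}

theorem siReach_iff_siChain : SIReach S L k ↔ SIChain S L k := by
  constructor
  · rintro ⟨f, rfl, rfl, hf⟩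
    induction k generalizing f with
    | zero => exact .refl _
    | succ k ih =>
      exact .head (hf 0 k.succ_pos) (ih (fun i ↦ f (i + 1)) fun i hi ↦ hf (i + 1) (by omega))
  · intro h
    induction h with
    | refl L => exact ⟨fun _ ↦ L, rfl, rfl, fun _ h ↦ absurd h (Nat.not_lt_zero _)⟩
    | @head S T L k hs _ ih =>
      obtain ⟨f, rfl, rfl, hf⟩ := ih
      refine ⟨fun i ↦ if i = 0 then S else f (i - 1), rfl, rfl, fun i hi ↦ ?_⟩
      rcases i with _ | i
      · simpa using hs
      · simpa using hf i (by omega)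

theorem SIChain.siDist_le (h : SIChain S L k) : SIDist S L ≤ k :=
  sInf_le ⟨k, rfl, siReach_iff_siChain.mpr h⟩

theorem le_siDist {n : ℕ∞} (h : ∀ k, SIChain S L k → n ≤ k) : n ≤ SIDist S L :=
  le_sInf fun _ ⟨k, hk, hr⟩ ↦ hk ▸ h k (siReach_iff_siChain.mp hr)

theorem exists_siChain_of_siDist_ne_top (h : SIDist S L ≠ ⊤) :
    ∃ k, SIChain S L k ∧ SIDist S L = k := by
  have hne : {n : ℕ∞ | ∃ k : ℕ, n = k ∧ SIReach S L k}.Nonempty :=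
    Set.nonempty_iff_ne_empty.mpr fun he ↦ h (by rw [SIDist, he, sInf_empty])
  obtain ⟨k, hk, hr⟩ := csInf_mem hne
  exact ⟨k, siReach_iff_siChain.mp hr, hk⟩

theorem siDist_triangle (S T U : List β) : SIDist S U ≤ SIDist S T + SIDist T U := by
  rcases eq_or_ne (SIDist S T) ⊤ with h₁ | h₁
  · simp [h₁]
  rcases eq_or_ne (SIDist T U) ⊤ with h₂ | h₂
  · simp [h₂]
  obtain ⟨m, hm, hm'⟩ := exists_siChain_of_siDist_ne_top h₁
  obtain ⟨n, hn, hn'⟩ := exists_siChain_of_siDist_ne_top h₂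
  rw [hm', hn']
  exact_mod_cast (hm.trans hn).siDist_le

theorem siDist_cons_cons_le (x : β) (S L : List β) : SIDist (x :: S) (x :: L) ≤ SIDist S L := by
  rcases eq_or_ne (SIDist S L) ⊤ with h | h
  · simp [h]
  obtain ⟨k, hk, hk'⟩ := exists_siChain_of_siDist_ne_top h
  exact hk' ▸ (hk.cons x).siDist_le

theorem siDist_cons_le_one_add (S L : List β) (a : β) : SIDist S (a :: L) ≤ 1 + SIDist S L :=
  calc SIDist S (a :: L) ≤ SIDist S L + SIDist L (a :: L) := siDist_triangle _ _ _
    _ ≤ SIDist S L + 1 := by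
      gcongr
      exact_mod_cast (SIChain.single (SIStep.insert [] L a)).siDist_le
    _ = 1 + SIDist S L := add_comm _ _

end

theorem siDist_le_idxOf {S : List α} {a : α} (h : a ∈ S) :
    SIDist S (a :: S.erase a) ≤ S.idxOf a := by
  obtain ⟨p, q, rfl, hp⟩ := List.eq_append_cons_of_mem h
  rw [List.erase_append_right _ hp, List.erase_cons_head, List.idxOf_append_of_notMem hp,
    List.idxOf_cons_self, add_zero]
  exact (SIChain.move p q a).siDist_le

theorem siDist_cons_le_idxOf_add {S : List α} {a : α} (h : a ∈ S) (L : List α) :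
    SIDist S (a :: L) ≤ S.idxOf a + SIDist (S.erase a) L :=
  (siDist_triangle _ _ _).trans (add_le_add (siDist_le_idxOf h) (siDist_cons_cons_le _ _ _))

theorem idxOf_add_siDist_erase_le (w v : List α) (a : α) :
    ((w ++ a :: v).idxOf a : ℕ∞) + SIDist ((w ++ a :: v).erase a) (w ++ v) ≤ w.length := by
  induction w with
  | nil => simpa using (SIChain.refl v).siDist_le
  | cons x w ih =>
    by_cases hx : x = a
    · subst hx
      simpa using (SIChain.move w v x).siDist_le.trans (by norm_cast; omega)
    · rw [List.cons_append, List.idxOf_cons_ne _ hx, List.erase_cons_tail (by simpa using hx)]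
      set E := (w ++ a :: v).erase a
      calc ((w ++ a :: v).idxOf a + 1 : ℕ) + SIDist (x :: E) (x :: (w ++ v))
          ≤ ((w ++ a :: v).idxOf a : ℕ∞) + SIDist E (w ++ v) + 1 := by
            push_cast
            rw [add_right_comm]
            gcongr
            exact siDist_cons_cons_le _ _ _
        _ ≤ (x :: w).length := by simpa using add_le_add_right ih 1

theorem min_le_siDist_cons (S L : List α) (a : α) :
    min (1 + SIDist S L) (if a ∈ S then (S.idxOf a : ℕ∞) + SIDist (S.erase a) L else ⊤) ≤
      SIDist S (a :: L) := by
  refine le_siDist fun k hk ↦ ?_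
  rcases hk.to_cons_cases with ⟨k', hk', hL⟩ | ⟨w, v, k', hS, hk', hL⟩
  · calc _ ≤ 1 + SIDist S L := min_le_left _ _
      _ ≤ 1 + k' := by gcongr; exact hL.siDist_le
      _ ≤ k := by norm_cast; omega
  · have hSwv := hS ▸ idxOf_add_siDist_erase_le w v a
    rw [if_pos (hS ▸ List.mem_append_right w List.mem_cons_self)]
    calc _ ≤ (S.idxOf a : ℕ∞) + SIDist (S.erase a) L := min_le_right _ _
      _ ≤ (S.idxOf a : ℕ∞) + (SIDist (S.erase a) (w ++ v) + k') := by
        gcongr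
        exact (siDist_triangle _ _ _).trans (by gcongr; exact hL.siDist_le)
      _ ≤ w.length + k' := by rw [← add_assoc]; exact add_le_add_left hSwv _
      _ ≤ k := by exact_mod_cast hk'

theorem siDist_cons (S L : List α) (a : α) :
    SIDist S (a :: L) = min (1 + SIDist S L)
      (if a ∈ S then (S.idxOf a : ℕ∞) + SIDist (S.erase a) L else ⊤) := by
  refine le_antisymm (le_min (siDist_cons_le_one_add S L a) ?_) (min_le_siDist_cons S L a)
  split_ifs with h
  · exact siDist_cons_le_idxOf_add h L
  · exact le_top

theorem dist_branch_general (S L : List α) (hL : L ≠ []) :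
    SIDist S L =
      min (1 + SIDist S L.tail)
        (if L.head hL ∈ S then
            (S.idxOf (L.head hL) : ℕ∞) + SIDist (S.erase (L.head hL)) L.tail
          else ⊤) := by
  obtain ⟨a, L, rfl⟩ := List.exists_cons_of_ne_nil hL
  exact siDist_cons S L a

/-- If `S[0] ≠ L[0]` and `δ(S, L)` is finite, then
`δ(S, L) = min d_ins d_swaps`, where `d_ins = 1 + δ(S, L.tail)` and
`d_swaps = (r - 1) + δ(S', L.tail)` when the symbol `L[0]` first occurs in `S`
at (1-indexed) position `r` (so `r - 1 = indexOf`), `S'` being `S` with that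
occurrence removed; `d_swaps = ∞` if `L[0]` does not occur in `S`. -/
theorem dist_branch (S L : List α) (hS : S ≠ []) (hL : L ≠ [])
    (hne : S.head hS ≠ L.head hL) (hfin : SIDist S L ≠ ⊤) :
    SIDist S L =
      min (1 + SIDist S L.tail)
        (if L.head hL ∈ S then
            (S.idxOf (L.head hL) : ℕ∞) + SIDist (S.erase (L.head hL)) L.tail
          else ⊤) :=
  dist_branch_general S L hL
end
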